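/- arXiv:1509.09162 — 3 statements merged into one kernel-verified Lean document; each statement's English description precedes it below -/
import Mathlib

section
/- Let p₁, p₂ ∈ (1,∞] with 1/p₁ + 1/p₂ < 1, and let r₁, r₂ ∈ (0,∞). Suppose there exist a constant C ≥ 1 and exponents t₁, t₂ ≥ 0 such that for all n₁, n₂ and all bounded bilinear forms U : ℓ_{p₁}^{n₁} × ℓ_{p₂}^{n₂} → ℂ we have (Σ_{i=1}^{n₁} (Σ_{j=1}^{n₂} |U(e_i,e_j)|^{r₂})^{r₁/r₂})^{1/r₁} ≤ C n₁^{t₁} n₂^{t₂} ‖U‖. Then t₂ ≥ max{1/r₂ − (1 − 1/p₂), 0}. -/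
open scoped ENNReal
open Filter

/-! Test the inequality on `T(x, y) = x₁ ∑ⱼ yⱼ` on `ℓ_{p₁}^1 × ℓ_{p₂}^n`. All its entries
`T(e₁, eⱼ)` equal `1`, so the mixed sum is `n^{1/r₂}`, while Hölder's inequality gives
`‖T‖ ≤ n^{1 - 1/p₂}`. Hence `n^{1/r₂} ≤ C n^{t₂ + 1 - 1/p₂}` for every `n`, which forces
`1/r₂ ≤ t₂ + 1 - 1/p₂`. -/

theorem le_of_forall_natCast_rpow_le_mul_rpow {a b K : ℝ}
    (h : ∀ n : ℕ, 0 < n → (n : ℝ) ^ a ≤ K * (n : ℝ) ^ b) : a ≤ b := by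
  by_contra! hab
  have hgrow : Tendsto (fun n : ℕ => (n : ℝ) ^ (a - b)) atTop atTop :=
    (tendsto_rpow_atTop (sub_pos.2 hab)).comp tendsto_natCast_atTop_atTop
  obtain ⟨n, hKn, hn⟩ := ((hgrow.eventually_gt_atTop K).and (eventually_gt_atTop 0)).exists
  have hn0 : (0 : ℝ) < n := by exact_mod_cast hn
  have hle := h n hn
  rw [← sub_add_cancel a b, Real.rpow_add hn0] at hle
  nlinarith [Real.rpow_pos_of_pos hn0 b]

namespace PiLp

variable {ι : Type*} [Fintype ι] (p : ℝ≥0∞) [Fact (1 ≤ p)]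

theorem sum_norm_apply_le_card_rpow_mul_norm {E : Type*} [SeminormedAddCommGroup E]
    (y : PiLp p fun _ : ι => E) :
    ∑ i, ‖y i‖ ≤ (Fintype.card ι : ℝ) ^ (1 - p⁻¹.toReal) * ‖y‖ := by
  rcases eq_or_ne p ∞ with rfl | hp
  · simpa using (Finset.sum_le_sum fun i _ => norm_apply_le y i).trans_eq (by simp)
  · have hp1 : 1 ≤ p.toReal := by simpa using ENNReal.toReal_mono hp (Fact.out : 1 ≤ p)
    simpa [PiLp.norm_eq_sum (zero_lt_one.trans_le hp1)] using
      Real.inner_le_weight_mul_Lp_of_nonneg Finset.univ hp1 (fun _ => 1) (fun i => ‖y i‖)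
        (fun _ => zero_le_one) fun i => norm_nonneg _

variable {𝕜 : Type*} [NontriviallyNormedField 𝕜]

theorem norm_proj_le (i : ι) : ‖PiLp.proj p (𝕜 := 𝕜) (fun _ : ι => 𝕜) i‖ ≤ 1 :=
  ContinuousLinearMap.opNorm_le_bound _ zero_le_one fun x => by simpa using norm_apply_le x i

theorem norm_sum_proj_le :
    ‖∑ i, PiLp.proj p (𝕜 := 𝕜) (fun _ : ι => 𝕜) i‖ ≤ (Fintype.card ι : ℝ) ^ (1 - p⁻¹.toReal) :=
  ContinuousLinearMap.opNorm_le_bound _ (by positivity) fun y => by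
    simpa using (norm_sum_le _ _).trans (sum_norm_apply_le_card_rpow_mul_norm p y)

end PiLp

section FirstCoordSumForm

variable (𝕜 : Type*) [NontriviallyNormedField 𝕜] (p₁ p₂ : ℝ≥0∞) (n : ℕ)

noncomputable def firstCoordSumForm :
    PiLp p₁ (fun _ : Fin 1 => 𝕜) →L[𝕜] PiLp p₂ (fun _ : Fin n => 𝕜) →L[𝕜] 𝕜 :=
  (PiLp.proj p₁ _ 0).smulRight (∑ j, PiLp.proj p₂ _ j)

theorem norm_firstCoordSumForm_le [Fact (1 ≤ p₁)] [Fact (1 ≤ p₂)] :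
    ‖firstCoordSumForm 𝕜 p₁ p₂ n‖ ≤ (n : ℝ) ^ (1 - p₂⁻¹.toReal) := by
  rw [firstCoordSumForm, ContinuousLinearMap.norm_smulRight_apply]
  simpa using mul_le_mul (PiLp.norm_proj_le p₁ 0) (PiLp.norm_sum_proj_le (ι := Fin n) p₂)
    (norm_nonneg _) zero_le_one

theorem firstCoordSumForm_single (i : Fin 1) (j : Fin n) :
    firstCoordSumForm 𝕜 p₁ p₂ n (WithLp.toLp p₁ (Pi.single i 1))
      (WithLp.toLp p₂ (Pi.single j 1)) = 1 := by
  simp [firstCoordSumForm, Subsingleton.elim i 0]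

end FirstCoordSumForm

theorem stmt6_general (p₁ p₂ : ℝ≥0∞) [Fact (1 ≤ p₁)] [Fact (1 ≤ p₂)]
    (r₁ r₂ : ℝ) (hr₁ : 0 < r₁)
    (C : ℝ) (hC : 1 ≤ C) (t₁ t₂ : ℝ) (ht₂ : 0 ≤ t₂)
    (h : ∀ (n₁ n₂ : ℕ)
      (U : PiLp p₁ (fun _ : Fin n₁ => ℂ) →L[ℂ] PiLp p₂ (fun _ : Fin n₂ => ℂ) →L[ℂ] ℂ),
      (∑ i : Fin n₁, (∑ j : Fin n₂, ‖U (WithLp.toLp p₁ (Pi.single i 1)) (WithLp.toLp p₂ (Pi.single j 1))‖ ^ r₂) ^ (r₁ / r₂)) ^ (1 / r₁)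
        ≤ C * (n₁ : ℝ) ^ t₁ * (n₂ : ℝ) ^ t₂ * ‖U‖) :
    max (1 / r₂ - (1 - (p₂⁻¹).toReal)) 0 ≤ t₂ := by
  refine max_le ?_ ht₂
  rw [sub_le_iff_le_add]
  refine le_of_forall_natCast_rpow_le_mul_rpow (K := C) fun n hn => ?_
  have hT := h 1 n (firstCoordSumForm ℂ p₁ p₂ n)
  simp only [firstCoordSumForm_single, norm_one, Real.one_rpow] at hT
  have hn0 : (0 : ℝ) < n := by exact_mod_cast hn
  have hmixed : (∑ _i : Fin 1, (∑ _j : Fin n, (1 : ℝ)) ^ (r₁ / r₂)) ^ (1 / r₁) = n ^ (1 / r₂) := by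
    simp only [Finset.sum_const, Finset.card_univ, Fintype.card_fin, nsmul_eq_mul, mul_one,
      one_smul]
    rw [← Real.rpow_mul hn0.le]
    field_simp
  calc (n : ℝ) ^ (1 / r₂)
      ≤ C * (1 : ℕ) ^ t₁ * n ^ t₂ * ‖firstCoordSumForm ℂ p₁ p₂ n‖ := hmixed ▸ hT
    _ ≤ C * n ^ t₂ * n ^ (1 - p₂⁻¹.toReal) := by
      rw [Nat.cast_one, Real.one_rpow, mul_one]
      exact mul_le_mul_of_nonneg_left (norm_firstCoordSumForm_le ℂ p₁ p₂ n)
        (mul_nonneg (by linarith) (by positivity))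
    _ = C * n ^ (t₂ + (1 - p₂⁻¹.toReal)) := by rw [Real.rpow_add hn0, mul_assoc]

/-- Optimality of the exponent `t₂` in the bilinear mixed-sum inequality:
necessarily `t₂ ≥ max(1/r₂ - (1 - 1/p₂), 0)`. -/
theorem stmt6 (p₁ p₂ : ℝ≥0∞) [Fact (1 ≤ p₁)] [Fact (1 ≤ p₂)]
    (hp₁ : 1 < p₁) (hp₂ : 1 < p₂) (hp : p₁⁻¹ + p₂⁻¹ < 1)
    (r₁ r₂ : ℝ) (hr₁ : 0 < r₁) (hr₂ : 0 < r₂)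
    (C : ℝ) (hC : 1 ≤ C) (t₁ t₂ : ℝ) (ht₁ : 0 ≤ t₁) (ht₂ : 0 ≤ t₂)
    (h : ∀ (n₁ n₂ : ℕ)
      (U : PiLp p₁ (fun _ : Fin n₁ => ℂ) →L[ℂ] PiLp p₂ (fun _ : Fin n₂ => ℂ) →L[ℂ] ℂ),
      (∑ i : Fin n₁, (∑ j : Fin n₂, ‖U (WithLp.toLp p₁ (Pi.single i 1)) (WithLp.toLp p₂ (Pi.single j 1))‖ ^ r₂) ^ (r₁ / r₂)) ^ (1 / r₁)
        ≤ C * (n₁ : ℝ) ^ t₁ * (n₂ : ℝ) ^ t₂ * ‖U‖) :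
    max (1 / r₂ - (1 - (p₂⁻¹).toReal)) 0 ≤ t₂ :=
  stmt6_general p₁ p₂ r₁ r₂ hr₁ C hC t₁ t₂ ht₂ h
end

section
/- Let p₁, p₂ ∈ (1,∞] with 1/p₁ + 1/p₂ < 1, and let r₁, r₂ ∈ (0,∞). Suppose there exist a constant C ≥ 1 and t₁ ≥ 0 such that for all n and all bounded bilinear forms U : ℓ_{p₁}^{n} × ℓ_{p₂}^{n} → ℂ we have (Σ_{i=1}^{n} (Σ_{j=1}^{n} |U(e_i,e_j)|^{r₂})^{r₁/r₂})^{1/r₁} ≤ C n^{t₁} ‖U‖. Then t₁ ≥ 1/r₁ − (1 − 1/p₁ − 1/p₂). -/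
/-!
Test the inequality on the diagonal form `D(x, y) = ∑ j, x j * y j`. Each row of its coefficient
matrix holds a single `1`, so its mixed sum is `n ^ (1 / r₁)`, while Hölder's inequality gives
`‖D‖ ≤ n ^ (1 - 1/p₁ - 1/p₂)`. Thus `n ^ (1 / r₁) ≤ C * n ^ (t₁ + 1 - 1/p₁ - 1/p₂)` for
every `n`, and letting `n → ∞` compares the exponents.
-/

open scoped ENNReal
open Filter

namespace PiLp
variable {ι 𝕜 : Type*} [Fintype ι] [RCLike 𝕜]

theorem norm_toLp_mul_le {p q r : ℝ≥0∞} [Fact (1 ≤ p)] [Fact (1 ≤ q)] [Fact (1 ≤ r)]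
    [p.HolderTriple q r] (x : PiLp p (fun _ : ι => 𝕜)) (y : PiLp q (fun _ : ι => 𝕜)) :
    ‖WithLp.toLp r (x.ofLp * y.ofLp)‖ ≤ ‖x‖ * ‖y‖ := by
  have hB : ∀ _ : ι, ‖ContinuousLinearMap.mul 𝕜 𝕜‖ ≤ ((1 : NNReal) : ℝ) :=
    fun _ => ContinuousLinearMap.opNorm_mul_le 𝕜 𝕜
  have hxy : WithLp.toLp r (x.ofLp * y.ofLp) = lpPiLpₗᵢ _ 𝕜
      (lp.holderL r _ hB ((lpPiLpₗᵢ _ 𝕜).symm x) ((lpPiLpₗᵢ _ 𝕜).symm y)) := by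
    ext i
    simp [lp.holderL, coe_lpPiLpₗᵢ, coe_lpPiLpₗᵢ_symm]
  have key := (lp.holderL (p := p) (q := q) r _ hB).le_of_opNorm₂_le_of_le
    (lp.norm_holderL_le r _ hB) (le_refl ‖(lpPiLpₗᵢ _ 𝕜).symm x‖)
    (le_refl ‖(lpPiLpₗᵢ _ 𝕜).symm y‖)
  simpa [hxy] using key

/-- Hölder for `1/r = 1/p + 1/q`, then Hölder again against the constant vector `1` in `ℓ^r'`
with `1/r' = 1 - 1/r`, whose norm is `card ι ^ (1/r')`. -/
theorem norm_sum_mul_le {p q : ℝ≥0∞} [Fact (1 ≤ p)] [Fact (1 ≤ q)]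
    (hpq : p⁻¹ + q⁻¹ ≤ 1)
    (x : PiLp p (fun _ : ι => 𝕜)) (y : PiLp q (fun _ : ι => 𝕜)) :
    ‖∑ i, x i * y i‖ ≤
      (Fintype.card ι : ℝ) ^ (1 - (p⁻¹).toReal - (q⁻¹).toReal) * ‖x‖ * ‖y‖ := by
  cases isEmpty_or_nonempty ι
  · simp only [Finset.univ_eq_empty, Finset.sum_empty, norm_zero]
    positivity
  set r := (p⁻¹ + q⁻¹)⁻¹
  set r' := (1 - (p⁻¹ + q⁻¹))⁻¹
  have : p.HolderTriple q r := .of p q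
  have : r.HolderTriple r' 1 := ⟨by simp [r, r', add_tsub_cancel_of_le hpq]⟩
  have : Fact (1 ≤ r) := ⟨ENNReal.one_le_inv.2 hpq⟩
  have : Fact (1 ≤ r') := ⟨ENNReal.one_le_inv.2 tsub_le_self⟩
  have hp : p⁻¹ ≠ ⊤ := ENNReal.inv_ne_top.2 (zero_lt_one.trans_le Fact.out).ne'
  have hq : q⁻¹ ≠ ⊤ := ENNReal.inv_ne_top.2 (zero_lt_one.trans_le Fact.out).ne'
  have hr' : (1 / r').toReal = 1 - (p⁻¹).toReal - (q⁻¹).toReal := by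
    rw [one_div, inv_inv, ENNReal.toReal_sub_of_le hpq ENNReal.one_ne_top,
      ENNReal.toReal_add hp hq, ENNReal.toReal_one, sub_sub]
  calc ‖∑ i, x i * y i‖
      ≤ ‖WithLp.toLp 1
          ((WithLp.toLp r (x.ofLp * y.ofLp)).ofLp * (WithLp.toLp r' 1).ofLp)‖ := by
        simpa [PiLp.norm_eq_of_L1] using norm_sum_le Finset.univ fun i => x i * y i
    _ ≤ ‖WithLp.toLp r (x.ofLp * y.ofLp)‖ * ‖WithLp.toLp r' (1 : ι → 𝕜)‖ :=
        norm_toLp_mul_le _ _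
    _ ≤ ‖x‖ * ‖y‖ * (Fintype.card ι : ℝ) ^ (1 / r').toReal := by
        rw [show (1 : ι → 𝕜) = Function.const ι 1 from rfl, PiLp.norm_toLp_const']
        gcongr
        · exact norm_toLp_mul_le x y
        · simp
    _ = _ := by rw [hr']; ring

variable (p q : ℝ≥0∞) [Fact (1 ≤ p)] [Fact (1 ≤ q)]

noncomputable def diagonalForm :
    PiLp p (fun _ : ι => 𝕜) →L[𝕜] PiLp q (fun _ : ι => 𝕜) →L[𝕜] 𝕜 :=
  ∑ i, (ContinuousLinearMap.mul 𝕜 𝕜).bilinearComp (PiLp.proj p _ i) (PiLp.proj q _ i)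

theorem diagonalForm_apply (x : PiLp p (fun _ : ι => 𝕜)) (y : PiLp q (fun _ : ι => 𝕜)) :
    diagonalForm p q x y = ∑ i, x i * y i := by
  simp [diagonalForm]

theorem diagonalForm_single [DecidableEq ι] (i j : ι) :
    diagonalForm p q (WithLp.toLp p (Pi.single i (1 : 𝕜))) (WithLp.toLp q (Pi.single j 1)) =
      if i = j then 1 else 0 := by
  simp [diagonalForm_apply, eq_comm]

theorem norm_diagonalForm_le (hpq : p⁻¹ + q⁻¹ ≤ 1) :
    ‖(diagonalForm p q : PiLp p (fun _ : ι => 𝕜) →L[𝕜] _)‖ ≤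
      (Fintype.card ι : ℝ) ^ (1 - (p⁻¹).toReal - (q⁻¹).toReal) :=
  ContinuousLinearMap.opNorm_le_bound₂ _ (by positivity) fun x y => by
    simpa only [diagonalForm_apply] using norm_sum_mul_le hpq x y

end PiLp

section MixedNorm

variable {ι 𝕜 : Type*} [Fintype ι] [DecidableEq ι] [RCLike 𝕜] {p q : ℝ≥0∞}
  [Fact (1 ≤ p)] [Fact (1 ≤ q)]

noncomputable def mixedCoeffNorm (r₁ r₂ : ℝ)
    (U : PiLp p (fun _ : ι => 𝕜) →L[𝕜] PiLp q (fun _ : ι => 𝕜) →L[𝕜] 𝕜) :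
    ℝ :=
  (∑ i, (∑ j, ‖U (WithLp.toLp p (Pi.single i 1)) (WithLp.toLp q (Pi.single j 1))‖ ^ r₂) ^
    (r₁ / r₂)) ^ (1 / r₁)

theorem mixedCoeffNorm_diagonalForm (r₁ : ℝ) {r₂ : ℝ} (hr₂ : r₂ ≠ 0) :
    mixedCoeffNorm r₁ r₂ (PiLp.diagonalForm p q : PiLp p (fun _ : ι => 𝕜) →L[𝕜] _) =
      (Fintype.card ι : ℝ) ^ (1 / r₁) := by
  simp only [mixedCoeffNorm, PiLp.diagonalForm_single]
  simp [apply_ite, Real.zero_rpow hr₂]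

end MixedNorm

theorem le_of_eventually_rpow_le_mul_rpow {a b C : ℝ}
    (h : ∀ᶠ n : ℕ in atTop, (n : ℝ) ^ a ≤ C * (n : ℝ) ^ b) : a ≤ b := by
  by_contra! hba
  have hlim : Tendsto (fun n : ℕ => (n : ℝ) ^ (a - b)) atTop atTop :=
    (tendsto_rpow_atTop (sub_pos.2 hba)).comp tendsto_natCast_atTop_atTop
  obtain ⟨n, hn, hCn, hn0⟩ :=
    (h.and ((hlim.eventually_gt_atTop C).and (eventually_gt_atTop 0))).exists
  have hpos : (0 : ℝ) < (n : ℝ) ^ b := Real.rpow_pos_of_pos (Nat.cast_pos.2 hn0) b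
  have hsplit : (n : ℝ) ^ a = (n : ℝ) ^ (a - b) * (n : ℝ) ^ b := by
    rw [← Real.rpow_add (Nat.cast_pos.2 hn0), sub_add_cancel]
  rw [hsplit] at hn
  exact (lt_irrefl C) (hCn.trans_le (le_of_mul_le_mul_right hn hpos))

theorem stmt7_general (p₁ p₂ : ℝ≥0∞) [Fact (1 ≤ p₁)] [Fact (1 ≤ p₂)]
    (hp : p₁⁻¹ + p₂⁻¹ < 1)
    (r₁ r₂ : ℝ) (hr₂ : 0 < r₂)
    (C : ℝ) (hC : 1 ≤ C) (t₁ : ℝ)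
    (h : ∀ (n : ℕ)
      (U : PiLp p₁ (fun _ : Fin n => ℂ) →L[ℂ] PiLp p₂ (fun _ : Fin n => ℂ) →L[ℂ] ℂ),
      (∑ i : Fin n, (∑ j : Fin n, ‖U (WithLp.toLp p₁ (Pi.single i 1)) (WithLp.toLp p₂ (Pi.single j 1))‖ ^ r₂) ^ (r₁ / r₂)) ^ (1 / r₁)
        ≤ C * (n : ℝ) ^ t₁ * ‖U‖) :
    1 / r₁ - (1 - (p₁⁻¹).toReal - (p₂⁻¹).toReal) ≤ t₁ := by
  set s := 1 - (p₁⁻¹).toReal - (p₂⁻¹).toReal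
  suffices 1 / r₁ ≤ t₁ + s by linarith
  refine le_of_eventually_rpow_le_mul_rpow (C := C) ?_
  filter_upwards [eventually_gt_atTop 0] with n hn
  have hn' : (0 : ℝ) < n := Nat.cast_pos.2 hn
  let D : PiLp p₁ (fun _ : Fin n => ℂ) →L[ℂ] PiLp p₂ (fun _ : Fin n => ℂ) →L[ℂ] ℂ :=
    PiLp.diagonalForm p₁ p₂
  calc (n : ℝ) ^ (1 / r₁) = mixedCoeffNorm r₁ r₂ D := by
        rw [mixedCoeffNorm_diagonalForm r₁ hr₂.ne', Fintype.card_fin]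
    _ ≤ C * (n : ℝ) ^ t₁ * ‖D‖ := h n D
    _ ≤ C * (n : ℝ) ^ t₁ * (n : ℝ) ^ s := by
        gcongr
        exact (PiLp.norm_diagonalForm_le p₁ p₂ hp.le).trans_eq (by rw [Fintype.card_fin])
    _ = C * (n : ℝ) ^ (t₁ + s) := by rw [Real.rpow_add hn', mul_assoc]

/-- Optimality of the exponent `t₁` in the bilinear mixed-sum inequality:
necessarily `t₁ ≥ 1/r₁ - (1 - 1/p₁ - 1/p₂)`. -/
theorem stmt7 (p₁ p₂ : ℝ≥0∞) [Fact (1 ≤ p₁)] [Fact (1 ≤ p₂)]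
    (hp₁ : 1 < p₁) (hp₂ : 1 < p₂) (hp : p₁⁻¹ + p₂⁻¹ < 1)
    (r₁ r₂ : ℝ) (hr₁ : 0 < r₁) (hr₂ : 0 < r₂)
    (C : ℝ) (hC : 1 ≤ C) (t₁ : ℝ) (ht₁ : 0 ≤ t₁)
    (h : ∀ (n : ℕ)
      (U : PiLp p₁ (fun _ : Fin n => ℂ) →L[ℂ] PiLp p₂ (fun _ : Fin n => ℂ) →L[ℂ] ℂ),
      (∑ i : Fin n, (∑ j : Fin n, ‖U (WithLp.toLp p₁ (Pi.single i 1)) (WithLp.toLp p₂ (Pi.single j 1))‖ ^ r₂) ^ (r₁ / r₂)) ^ (1 / r₁)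
        ≤ C * (n : ℝ) ^ t₁ * ‖U‖) :
    1 / r₁ - (1 - (p₁⁻¹).toReal - (p₂⁻¹).toReal) ≤ t₁ :=
  stmt7_general p₁ p₂ hp r₁ r₂ hr₂ C hC t₁ h
end

section
/- Let m ≥ 2, p₁,…,p_m ∈ [1,∞] with |1/p| := Σ_j 1/p_j ≤ 1/2, and r₁,…,r_m ∈ [1,2] with Σ_j 1/r_j > (m+1)/2 − |1/p|. Assume the generalized Hardy–Littlewood inequality holds: for any s₁,…,s_m ∈ [(1−|1/p|)^{-1}, 2] with Σ_j 1/s_j = (m+1)/2 − |1/p| there is D ≥ 1 with (Σ_{i₁}(…(Σ_{i_m}|T(e_{i₁},…,e_{i_m})|^{s_m})^{s_{m-1}/s_m}…)^{s₁/s₂})^{1/s₁} ≤ D‖T‖ for all m-linear T : ℓ_{p₁}^n × ⋯ × ℓ_{p_m}^n → ℂ and all n. Then there is a constant D' ≥ 1 (independent of n) such that (Σ_{i₁}(…(Σ_{i_m}|T(e_{i₁},…,e_{i_m})|^{r_m})^{r_{m-1}/r_m}…)^{r₁/r₂})^{1/r₁} ≤ D' · n^{Σ_j 1/r_j + |1/p|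 − (m+1)/2} · ‖T‖ for all such T and n. -/
open scoped ENNReal

noncomputable def mixedSum {n : ℕ} : (m : ℕ) → (Fin m → ℝ) → ((Fin m → Fin n) → ℝ) → ℝ
  | 0, _, F => F finZeroElim
  | m + 1, r, F =>
      (∑ i : Fin n,
        (mixedSum m (fun j => r j.succ) (fun is => F (Fin.cons i is))) ^ r 0) ^ (1 / r 0)

/-!
The reciprocals `1 / s_j` of the intermediate exponents are found between `1 / 2` and
`min (1 / r_j) (1 - |1/p|)` by the intermediate value theorem, so that the generalized
Hardy–Littlewood inequality applies to `s` and `s_j ≥ r_j`. Passing from `s` to `r` costs, level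
by level in the mixed sum, the Hölder factor `n ^ (1 / r_j - 1 / s_j)`, and these factors multiply
to `n ^ (∑ 1 / r_j + |1/p| - (m + 1) / 2)`.
-/

open Finset

section PowerSums

variable {ι : Type*} [Fintype ι]

lemma sum_rpow_rpow_inv_le_card_rpow_mul {a : ι → ℝ} (ha : ∀ i, 0 ≤ a i) {r s : ℝ}
    (hr : 0 < r) (hrs : r ≤ s) :
    (∑ i, a i ^ r) ^ (1 / r) ≤
      (Fintype.card ι : ℝ) ^ (1 / r - 1 / s) * (∑ i, a i ^ s) ^ (1 / s) := by
  have hs : 0 < s := hr.trans_le hrs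
  have hsum_r : 0 ≤ ∑ i, a i ^ r := sum_nonneg fun i _ => Real.rpow_nonneg (ha i) r
  have hsum_s : 0 ≤ ∑ i, a i ^ s := sum_nonneg fun i _ => Real.rpow_nonneg (ha i) s
  have hcard : (0 : ℝ) ≤ Fintype.card ι := Nat.cast_nonneg _
  have key : (∑ i, a i ^ r) ^ (s / r) ≤ (Fintype.card ι : ℝ) ^ (s / r - 1) * ∑ i, a i ^ s := by
    have := Real.rpow_sum_le_const_mul_sum_rpow_of_nonneg (s := univ) (f := fun i => a i ^ r)
      ((one_le_div hr).2 hrs) fun i _ => Real.rpow_nonneg (ha i) r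
    simpa [← Real.rpow_mul (ha _), mul_div_cancel₀ s hr.ne'] using this
  calc (∑ i, a i ^ r) ^ (1 / r) = ((∑ i, a i ^ r) ^ (s / r)) ^ (1 / s) := by
        rw [← Real.rpow_mul hsum_r]; field_simp
    _ ≤ ((Fintype.card ι : ℝ) ^ (s / r - 1) * ∑ i, a i ^ s) ^ (1 / s) := by gcongr
    _ = _ := by
        rw [Real.mul_rpow (Real.rpow_nonneg hcard _) hsum_s, ← Real.rpow_mul hcard]
        congr 2
        field_simp

lemma sum_rpow_rpow_inv_le_mul {a b : ι → ℝ} {c r : ℝ} (ha : ∀ i, 0 ≤ a i) (hb : ∀ i, 0 ≤ b i)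
    (hc : 0 ≤ c) (hab : ∀ i, a i ≤ c * b i) (hr : 0 < r) :
    (∑ i, a i ^ r) ^ (1 / r) ≤ c * (∑ i, b i ^ r) ^ (1 / r) := by
  calc (∑ i, a i ^ r) ^ (1 / r) ≤ (∑ i, (c * b i) ^ r) ^ (1 / r) :=
        Real.rpow_le_rpow (sum_nonneg fun i _ => Real.rpow_nonneg (ha i) r)
          (sum_le_sum fun i _ => Real.rpow_le_rpow (ha i) (hab i) hr.le) (one_div_nonneg.2 hr.le)
    _ = c * (∑ i, b i ^ r) ^ (1 / r) := by
        simp only [Real.mul_rpow hc (hb _), ← mul_sum]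
        rw [Real.mul_rpow (Real.rpow_nonneg hc _) (sum_nonneg fun i _ => Real.rpow_nonneg (hb i) _),
          ← Real.rpow_mul hc, mul_one_div_cancel hr.ne', Real.rpow_one]

lemma exists_mem_Icc_sum_eq {lo hi : ι → ℝ} (h : lo ≤ hi) {C : ℝ}
    (hlo : ∑ i, lo i ≤ C) (hhi : C ≤ ∑ i, hi i) : ∃ t ∈ Set.Icc lo hi, ∑ i, t i = C := by
  let path : ℝ → ι → ℝ := fun θ i => lo i + θ * (hi i - lo i)
  have hcont : ContinuousOn (fun θ => ∑ i, path θ i) (Set.Icc 0 1) := by fun_prop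
  obtain ⟨θ, ⟨hθ0, hθ1⟩, hθ⟩ :=
    intermediate_value_Icc zero_le_one hcont ⟨by simpa [path] using hlo, by simpa [path] using hhi⟩
  refine ⟨path θ, ⟨fun i => ?_, fun i => ?_⟩, hθ⟩
  · have := mul_nonneg hθ0 (sub_nonneg.2 (h i))
    simp only [path]; linarith
  · have := mul_le_of_le_one_left (sub_nonneg.2 (h i)) hθ1
    simp only [path]; linarith

lemma exists_exponents_sum_one_div_eq {a : ℝ} (ha : a ≤ 1 / 2) {r : ι → ℝ}
    (hr0 : ∀ j, 0 < r j) (hr2 : ∀ j, r j ≤ 2)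
    (hsum : ((Fintype.card ι : ℝ) + 1) / 2 - a ≤ ∑ j, 1 / r j) :
    ∃ s : ι → ℝ, (∀ j, (1 - a)⁻¹ ≤ s j ∧ s j ≤ 2) ∧ (∀ j, r j ≤ s j) ∧
      ∑ j, 1 / s j = ((Fintype.card ι : ℝ) + 1) / 2 - a := by
  set u : ι → ℝ := fun j => min (1 / r j) (1 - a)
  have hu : ∀ j, 1 / 2 ≤ u j := fun j =>
    le_min (one_div_le_one_div_of_le (hr0 j) (hr2 j)) (by linarith)
  have hsum_half : ∑ _j : ι, (1 / 2 : ℝ) = Fintype.card ι / 2 := by rw [sum_const, card_univ, nsmul_eq_mul]; ring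
  have hu_sum : ((Fintype.card ι : ℝ) + 1) / 2 - a ≤ ∑ j, u j := by
    by_cases hall : ∀ j, 1 / r j ≤ 1 - a
    · rwa [sum_congr rfl fun j _ => min_eq_left (hall j)]
    · obtain ⟨j₀, hj₀⟩ := not_forall.1 hall
      have hj₀ : u j₀ = 1 - a := min_eq_right (not_le.1 hj₀).le
      have := single_le_sum (fun j _ => sub_nonneg.2 (hu j)) (mem_univ j₀)
      rw [sum_sub_distrib, hsum_half, hj₀] at this
      linarith
  obtain ⟨t, ⟨hlo, hhi⟩, ht⟩ := exists_mem_Icc_sum_eq (lo := fun _ => 1 / 2) hu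
    (by rw [hsum_half]; linarith) hu_sum
  have ht0 : ∀ j, 0 < t j := fun j => lt_of_lt_of_le (by norm_num) (hlo j)
  refine ⟨fun j => (t j)⁻¹, fun j => ⟨?_, ?_⟩, fun j => ?_, by simpa using ht⟩
  · exact inv_anti₀ (ht0 j) ((hhi j).trans (min_le_right _ _))
  · simpa using inv_anti₀ (by norm_num) (hlo j)
  · simpa using inv_anti₀ (ht0 j) ((hhi j).trans (min_le_left _ _))

end PowerSums

lemma mixedSum_nonneg {n : ℕ} : ∀ {m : ℕ} (r : Fin m → ℝ) {F : (Fin m → Fin n) → ℝ},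
    (∀ i, 0 ≤ F i) → 0 ≤ mixedSum m r F
  | 0, _, _, hF => hF _
  | _ + 1, _, _, hF => Real.rpow_nonneg (sum_nonneg fun _ _ =>
      Real.rpow_nonneg (mixedSum_nonneg _ fun _ => hF _) _) _

lemma mixedSum_le_rpow_mul_mixedSum {n : ℕ} : ∀ {m : ℕ} {r s : Fin m → ℝ},
    (∀ j, 0 < r j) → (∀ j, r j ≤ s j) → ∀ {F : (Fin m → Fin n) → ℝ}, (∀ i, 0 ≤ F i) →
    mixedSum m r F ≤ (n : ℝ) ^ (∑ j, (1 / r j - 1 / s j)) * mixedSum m s F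
  | 0, _, _, _, _, _, _ => by simp [mixedSum]
  | m + 1, r, s, hr, hrs, F, hF => by
      set c : ℝ := (n : ℝ) ^ (∑ j : Fin m, (1 / r j.succ - 1 / s j.succ))
      have hexp : ∀ j, 0 ≤ 1 / r j - 1 / s j := fun j =>
        sub_nonneg.2 (one_div_le_one_div_of_le (hr j) (hrs j))
      have hinner (i : Fin n) := mixedSum_le_rpow_mul_mixedSum (fun j => hr j.succ)
        (fun j => hrs j.succ) (F := fun is => F (Fin.cons i is)) fun _ => hF _
      calc mixedSum (m + 1) r F
          ≤ c * (∑ i, mixedSum m (fun j => s j.succ) (fun is => F (Fin.cons i is)) ^ r 0) ^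
              (1 / r 0) :=
            sum_rpow_rpow_inv_le_mul (fun _ => mixedSum_nonneg _ fun _ => hF _)
              (fun _ => mixedSum_nonneg _ fun _ => hF _) (Real.rpow_nonneg n.cast_nonneg _)
              hinner (hr 0)
        _ ≤ c * ((n : ℝ) ^ (1 / r 0 - 1 / s 0) * mixedSum (m + 1) s F) := by
            gcongr
            simpa only [Fintype.card_fin, mixedSum] using sum_rpow_rpow_inv_le_card_rpow_mul (ι := Fin n)
              (fun _ => mixedSum_nonneg _ fun _ => hF _) (hr 0) (hrs 0)
        _ = (n : ℝ) ^ (∑ j, (1 / r j - 1 / s j)) * mixedSum (m + 1) s F := by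
            rw [Fin.sum_univ_succ, Real.rpow_add_of_nonneg n.cast_nonneg (hexp 0)
              (sum_nonneg fun j _ => hexp j.succ)]
            ring

theorem stmt14_general (m : ℕ) (p : Fin m → ℝ≥0∞) [∀ j, Fact (1 ≤ p j)]
    (hP : ∑ j, (p j)⁻¹ ≤ 1 / 2) (r : Fin m → ℝ)
    (hr : ∀ j, 1 ≤ r j ∧ r j ≤ 2)
    (hsum : ((m : ℝ) + 1) / 2 - (∑ j, (p j)⁻¹).toReal < ∑ j, 1 / r j)
    (hGHL : ∀ s : Fin m → ℝ,
      (∀ j, (1 - (∑ j, (p j)⁻¹).toReal)⁻¹ ≤ s j ∧ s j ≤ 2) →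
      (∑ j, 1 / s j) = ((m : ℝ) + 1) / 2 - (∑ j, (p j)⁻¹).toReal →
      ∃ D : ℝ, 1 ≤ D ∧ ∀ (n : ℕ)
        (T : ContinuousMultilinearMap ℂ (fun j : Fin m => PiLp (p j) (fun _ : Fin n => ℂ)) ℂ),
        mixedSum m s (fun i => ‖T (fun j => WithLp.toLp (p j) (Pi.single (i j) 1 : Fin n → ℂ))‖) ≤ D * ‖T‖) :
    ∃ D' : ℝ, 1 ≤ D' ∧ ∀ (n : ℕ)
      (T : ContinuousMultilinearMap ℂ (fun j : Fin m => PiLp (p j) (fun _ : Fin n => ℂ)) ℂ),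
      mixedSum m r (fun i => ‖T (fun j => WithLp.toLp (p j) (Pi.single (i j) 1 : Fin n → ℂ))‖) ≤
        D' * (n : ℝ) ^ ((∑ j, 1 / r j) + (∑ j, (p j)⁻¹).toReal - ((m : ℝ) + 1) / 2) * ‖T‖ := by
  set a := (∑ j, (p j)⁻¹).toReal
  have ha : a ≤ 1 / 2 := by simpa [a] using ENNReal.toReal_mono (by simp) hP
  have hr0 : ∀ j, 0 < r j := fun j => one_pos.trans_le (hr j).1
  obtain ⟨s, hs, hrs, hs_sum⟩ :=
    exists_exponents_sum_one_div_eq ha hr0 (fun j => (hr j).2) (by simpa using hsum.le)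
  rw [Fintype.card_fin] at hs_sum
  obtain ⟨D, hD1, hD⟩ := hGHL s hs hs_sum
  refine ⟨D, hD1, fun n T => ?_⟩
  have hexp : ∑ j, (1 / r j - 1 / s j) = (∑ j, 1 / r j) + a - ((m : ℝ) + 1) / 2 := by
    rw [sum_sub_distrib, hs_sum]; ring
  calc _ ≤ (n : ℝ) ^ ((∑ j, 1 / r j) + a - ((m : ℝ) + 1) / 2) * mixedSum m s _ :=
        hexp ▸ mixedSum_le_rpow_mul_mixedSum hr0 hrs fun _ => norm_nonneg _
    _ ≤ (n : ℝ) ^ ((∑ j, 1 / r j) + a - ((m : ℝ) + 1) / 2) * (D * ‖T‖) := by gcongr; exact hD n T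
    _ = _ := by ring

/-- Theorem 3 of the paper (`|1/p| ≤ 1/2`, `r ∈ [1,2]^m`): assuming the generalized
Hardy–Littlewood inequality, the mixed-sum inequality holds with the optimal power
`n^{∑ 1/r_j + |1/p| - (m+1)/2}`. -/
theorem stmt14 (m : ℕ) (hm : 2 ≤ m) (p : Fin m → ℝ≥0∞) [∀ j, Fact (1 ≤ p j)]
    (hP : ∑ j, (p j)⁻¹ ≤ 1 / 2) (r : Fin m → ℝ)
    (hr : ∀ j, 1 ≤ r j ∧ r j ≤ 2)
    (hsum : ((m : ℝ) + 1) / 2 - (∑ j, (p j)⁻¹).toReal < ∑ j, 1 / r j)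
    (hGHL : ∀ s : Fin m → ℝ,
      (∀ j, (1 - (∑ j, (p j)⁻¹).toReal)⁻¹ ≤ s j ∧ s j ≤ 2) →
      (∑ j, 1 / s j) = ((m : ℝ) + 1) / 2 - (∑ j, (p j)⁻¹).toReal →
      ∃ D : ℝ, 1 ≤ D ∧ ∀ (n : ℕ)
        (T : ContinuousMultilinearMap ℂ (fun j : Fin m => PiLp (p j) (fun _ : Fin n => ℂ)) ℂ),
        mixedSum m s (fun i => ‖T (fun j => WithLp.toLp (p j) (Pi.single (i j) 1 : Fin n → ℂ))‖) ≤ D * ‖T‖) :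
    ∃ D' : ℝ, 1 ≤ D' ∧ ∀ (n : ℕ)
      (T : ContinuousMultilinearMap ℂ (fun j : Fin m => PiLp (p j) (fun _ : Fin n => ℂ)) ℂ),
      mixedSum m r (fun i => ‖T (fun j => WithLp.toLp (p j) (Pi.single (i j) 1 : Fin n → ℂ))‖) ≤
        D' * (n : ℝ) ^ ((∑ j, 1 / r j) + (∑ j, (p j)⁻¹).toReal - ((m : ℝ) + 1) / 2) * ‖T‖ :=
  stmt14_general m p hP r hr hsum hGHL
end
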